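/- For f, g ∈ 𝕋[x_1,…,x_n]: f ∼ g (f and g take the same value at every point of 𝕋^n) if and only if f^e = g^e as polynomials. -/

import Mathlib

/-- The extended tropical semiring `𝕋`: tangible reals `(a, false)`,
ghost reals `(a, true)`, and `none` = `-∞`. -/
def T : Type := Option (ℝ × Bool)

namespace T

/-- The tangible element of value `a`. -/
def tang (a : ℝ) : T := some (a, false)

/-- The ghost element `a^ν` of value `a`. -/
def ghost (a : ℝ) : T := some (a, true)

/-- Tropical addition on `𝕋`. -/
noncomputable def add : T → T → T
  | none, y => y
  | some p, none => some p
  | some (a, s), some (b, t) =>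
      if a < b then some (b, t) else if b < a then some (a, s) else some (a, true)

/-- Tropical multiplication on `𝕋`. -/
noncomputable def mul : T → T → T
  | none, _ => none
  | some _, none => none
  | some (a, s), some (b, t) => some (a + b, s || t)

lemma add_assoc' : ∀ x y z : T, add (add x y) z = add x (add y z) := by
  rintro (_ | ⟨a, s⟩) (_ | ⟨b, t⟩) (_ | ⟨c, u⟩) <;>
    simp only [add, T] <;>
    (try split_ifs) <;>
    simp only [add, T] <;>
    (try split_ifs) <;>
    first
      | rfl
      | (exfalso; linarith)
      | (refine congrArg some ?_; refine Prod.ext ?_ ?_ <;>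
          first | rfl | linarith | simp)

lemma add_comm' : ∀ x y : T, add x y = add y x := by
  rintro (_ | ⟨a, s⟩) (_ | ⟨b, t⟩) <;>
    simp only [add, T] <;>
    (try split_ifs) <;>
    first
      | rfl
      | (exfalso; linarith)
      | (refine congrArg some ?_; refine Prod.ext ?_ ?_ <;>
          first | rfl | linarith | simp)

lemma mul_assoc' : ∀ x y z : T, mul (mul x y) z = mul x (mul y z) := by
  rintro (_ | ⟨a, s⟩) (_ | ⟨b, t⟩) (_ | ⟨c, u⟩) <;>
    simp [mul, add_assoc, Bool.or_assoc] <;> rfl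

lemma mul_comm' : ∀ x y : T, mul x y = mul y x := by
  rintro (_ | ⟨a, s⟩) (_ | ⟨b, t⟩) <;> simp [mul, add_comm, Bool.or_comm] <;> rfl

lemma left_distrib' : ∀ x y z : T, mul x (add y z) = add (mul x y) (mul x z) := by
  rintro (_ | ⟨a, s⟩) (_ | ⟨b, t⟩) (_ | ⟨c, u⟩) <;>
    simp only [add, mul, T] <;>
    (try split_ifs) <;>
    simp only [add, mul, T] <;>
    (try split_ifs) <;>
    first
      | rfl
      | (exfalso; linarith)
      | (refine congrArg some ?_; refine Prod.ext ?_ ?_ <;>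
          first | rfl | linarith | simp)

noncomputable instance : Zero T := ⟨none⟩
noncomputable instance : One T := ⟨some (0, false)⟩
noncomputable instance : Add T := ⟨add⟩
noncomputable instance : Mul T := ⟨mul⟩

noncomputable instance : CommSemiring T where
  add := (· + ·)
  zero := 0
  add_assoc := add_assoc'
  zero_add := fun x => by cases x <;> rfl
  add_zero := fun x => by cases x <;> rfl
  add_comm := add_comm'
  mul := (· * ·)
  one := 1
  mul_assoc := mul_assoc'
  one_mul := fun x => by
    show mul (some (0, false)) x = x
    rcases x with _ | ⟨a, s⟩ <;> simp [mul] <;> rfl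
  mul_one := fun x => by
    show mul x (some (0, false)) = x
    rcases x with _ | ⟨a, s⟩ <;> simp [mul] <;> rfl
  mul_comm := mul_comm'
  zero_mul := fun x => by cases x <;> rfl
  mul_zero := fun x => by cases x <;> rfl
  left_distrib := left_distrib'
  right_distrib := fun x y z => by
    show mul (add x y) z = add (mul x z) (mul y z)
    rw [mul_comm', left_distrib', mul_comm' z x, mul_comm' z y]
  nsmul := nsmulRec

/-- Membership in the ghost part `𝕌̄ = 𝕌 ∪ {-∞}` of `𝕋`. -/
def isGhost : T → Prop
  | none => True
  | some (_, s) => s = true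

/-- Membership in the tangible part `ℝ ∪ {-∞}` of `𝕋`. -/
def isTangible : T → Prop
  | none => True
  | some (_, s) => s = false

/-- The underlying real value (junk value `0` at `-∞`); this is `π` on elements `≠ -∞`. -/
def val : T → ℝ
  | none => 0
  | some (a, _) => a

/-- The ghost map `ν`. -/
def nu : T → T
  | none => none
  | some (a, _) => some (a, true)

end T

namespace T

/-- The model value in the half line `[0,∞)`: `-∞ ↦ 0`, an element of value `a ↦ exp a`. -/
noncomputable def gval : T → ℝ
  | none => 0
  | some (a, _) => Real.exp a

lemma nu_isGhost : ∀ x : T, isGhost (nu x)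
  | none => trivial
  | some (_, _) => rfl

lemma gval_injOn_tang : Set.InjOn gval {x : T | isTangible x} := by
  rintro (_ | ⟨a, s⟩) hx (_ | ⟨b, t⟩) hy h <;>
    simp only [gval, Set.mem_setOf_eq, isTangible] at hx hy h
  · rfl
  · exact absurd h.symm (Real.exp_pos b).ne'
  · exact absurd h (Real.exp_pos a).ne'
  · rw [Real.exp_eq_exp] at h; subst hx; subst hy; subst h; rfl

lemma gval_injOn_ghost : Set.InjOn gval {x : T | isGhost x} := by
  rintro (_ | ⟨a, s⟩) hx (_ | ⟨b, t⟩) hy h <;>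
    simp only [gval, Set.mem_setOf_eq, isGhost] at hx hy h
  · rfl
  · exact absurd h.symm (Real.exp_pos b).ne'
  · exact absurd h (Real.exp_pos a).ne'
  · rw [Real.exp_eq_exp] at h; subst hx; subst hy; subst h; rfl

lemma gval_image_tang : gval '' {x : T | isTangible x} = Set.Ici 0 := by
  ext y
  constructor
  · rintro ⟨(_ | ⟨a, s⟩), hx, rfl⟩
    · exact Set.self_mem_Ici
    · exact le_of_lt (by simpa [gval] using Real.exp_pos a)
  · intro hy
    rcases eq_or_lt_of_le (Set.mem_Ici.mp hy : (0 : ℝ) ≤ y) with h | h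
    · exact ⟨none, trivial, h⟩
    · exact ⟨some (Real.log y, false), rfl, by simp [gval, Real.exp_log h]⟩

lemma gval_image_ghost : gval '' {x : T | isGhost x} = Set.Ici 0 := by
  ext y
  constructor
  · rintro ⟨(_ | ⟨a, s⟩), hx, rfl⟩
    · exact Set.self_mem_Ici
    · exact le_of_lt (by simpa [gval] using Real.exp_pos a)
  · intro hy
    rcases eq_or_lt_of_le (Set.mem_Ici.mp hy : (0 : ℝ) ≤ y) with h | h
    · exact ⟨none, trivial, h⟩
    · exact ⟨some (Real.log y, true), rfl, by simp [gval, Real.exp_log h]⟩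

/-- The closed sets of the topology on `𝕋`: both the tangible and the ghost layers are
closed in the model `[0,∞)` of `𝕌̄`, and the ghost image of the tangible layer is
contained in the set. -/
def TIsClosed (W : Set T) : Prop :=
  IsClosed (gval '' (W ∩ {x | isTangible x})) ∧
  IsClosed (gval '' (W ∩ {x | isGhost x})) ∧
  nu '' (W ∩ {x | isTangible x}) ⊆ W ∩ {x | isGhost x}

/-- The topology on `𝕋`. -/
noncomputable instance : TopologicalSpace T :=
  TopologicalSpace.ofClosed {W | TIsClosed W}
    (by
      refine ⟨?_, ?_, ?_⟩ <;> simp [TIsClosed])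
    (fun A hA => by
      rcases A.eq_empty_or_nonempty with rfl | hne
      · rw [Set.sInter_empty]
        refine ⟨?_, ?_, ?_⟩
        · rw [Set.univ_inter, gval_image_tang]; exact isClosed_Ici
        · rw [Set.univ_inter, gval_image_ghost]; exact isClosed_Ici
        · rintro y ⟨x, ⟨-, _⟩, rfl⟩
          exact ⟨trivial, nu_isGhost x⟩
      · have : Nonempty A := hne.to_subtype
        have h1 : (⋂₀ A) ∩ {x : T | isTangible x}
            = ⋂ (W : A), ((W : Set T) ∩ {x | isTangible x}) := by
          ext x
          simp only [Set.mem_inter_iff, Set.mem_sInter, Set.mem_iInter, Set.mem_setOf_eq]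
          constructor
          · rintro ⟨h, ht⟩ W; exact ⟨h W W.2, ht⟩
          · intro h
            obtain ⟨W, hW⟩ := hne
            exact ⟨fun V hV => (h ⟨V, hV⟩).1, (h ⟨W, hW⟩).2⟩
        have h2 : (⋂₀ A) ∩ {x : T | isGhost x}
            = ⋂ (W : A), ((W : Set T) ∩ {x | isGhost x}) := by
          ext x
          simp only [Set.mem_inter_iff, Set.mem_sInter, Set.mem_iInter, Set.mem_setOf_eq]
          constructor
          · rintro ⟨h, ht⟩ W; exact ⟨h W W.2, ht⟩
          · intro h
            obtain ⟨W, hW⟩ := hne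
            exact ⟨fun V hV => (h ⟨V, hV⟩).1, (h ⟨W, hW⟩).2⟩
        refine ⟨?_, ?_, ?_⟩
        · rw [h1, Set.InjOn.image_iInter_eq
            (gval_injOn_tang.mono (Set.iUnion_subset fun W => Set.inter_subset_right))]
          exact isClosed_iInter fun W => (hA W.2).1
        · rw [h2, Set.InjOn.image_iInter_eq
            (gval_injOn_ghost.mono (Set.iUnion_subset fun W => Set.inter_subset_right))]
          exact isClosed_iInter fun W => (hA W.2).2.1
        · rintro y ⟨x, ⟨hx, hxt⟩, rfl⟩
          refine ⟨fun W hW => ((hA hW).2.2 ⟨x, ⟨hx W hW, hxt⟩, rfl⟩).1, nu_isGhost x⟩)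
    (fun A hA B hB => by
      have h1 : (A ∪ B) ∩ {x : T | isTangible x}
          = (A ∩ {x | isTangible x}) ∪ (B ∩ {x | isTangible x}) :=
        Set.union_inter_distrib_right A B _
      have h2 : (A ∪ B) ∩ {x : T | isGhost x}
          = (A ∩ {x | isGhost x}) ∪ (B ∩ {x | isGhost x}) :=
        Set.union_inter_distrib_right A B _
      refine ⟨?_, ?_, ?_⟩
      · rw [h1, Set.image_union]; exact hA.1.union hB.1
      · rw [h2, Set.image_union]; exact hA.2.1.union hB.2.1
      · rintro y ⟨x, ⟨hx, hxt⟩, rfl⟩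
        rcases hx with hxA | hxB
        · have h := hA.2.2 ⟨x, ⟨hxA, hxt⟩, rfl⟩
          exact ⟨Or.inl h.1, h.2⟩
        · have h := hB.2.2 ⟨x, ⟨hxB, hxt⟩, rfl⟩
          exact ⟨Or.inr h.1, h.2⟩)

end T

namespace T

/-- `f` dominates `g` if `f ⊕ g` and `f` agree as functions. -/
def Dominates {n : ℕ} (f g : MvPolynomial (Fin n) T) : Prop :=
  ∀ a : Fin n → T, MvPolynomial.eval a f + MvPolynomial.eval a g = MvPolynomial.eval a f

/-- The polynomial obtained from `f` by deleting the monomial with exponent `i`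
(setting its coefficient to `-∞`). -/
noncomputable def removeMono {n : ℕ} (i : Fin n →₀ ℕ) (f : MvPolynomial (Fin n) T) :
    MvPolynomial (Fin n) T :=
  ∑ j ∈ f.support.erase i, MvPolynomial.monomial j (MvPolynomial.coeff j f)

/-- The monomial of `f` with exponent `i` is essential. -/
def Essential {n : ℕ} (f : MvPolynomial (Fin n) T) (i : Fin n →₀ ℕ) : Prop :=
  i ∈ f.support ∧
    ¬ Dominates (removeMono i f) (MvPolynomial.monomial i (MvPolynomial.coeff i f))

open Classical in
/-- The essential part `f^e` of `f`: the sum of the essential monomials of `f`. -/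
noncomputable def essentialPart {n : ℕ} (f : MvPolynomial (Fin n) T) :
    MvPolynomial (Fin n) T :=
  ∑ i ∈ f.support,
    if Essential f i then MvPolynomial.monomial i (MvPolynomial.coeff i f) else 0

end T

/-!
Evaluated at a tangible point `x ∈ ℝⁿ`, a polynomial becomes the maximum of the affine functions
`x ↦ π(f_i) + ⟨i, x⟩` of its monomials. A monomial is essential exactly when its affine function is
the strict maximum somewhere: a witness in `𝕋ⁿ` is moved into `ℝⁿ` by sending its `-∞`
coordinates to `-∞`, and at a witness where the rest of the polynomial is tangible only one other
monomial ties, a tie that is broken by moving in the direction of the difference of the two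
exponents. Hence deleting an inessential monomial changes neither the function nor which of the
other monomials are essential, and induction gives `f ∼ f^e`. Conversely, if `f ∼ g` and `i` is
essential in `f`, then near a point where `i` strictly dominates `f`, the function of `g` is affine
with slope `i`; a monomial of `g` touching it from below must have exponent `i`, so `i` strictly
dominates `g` there too, and comparing values gives equal coefficients.
-/

namespace T

open MvPolynomial Filter Topology

def toWithBot : T → WithBot ℝ
  | none => ⊥
  | some (a, _) => a

@[simp] lemma toWithBot_zero : toWithBot 0 = ⊥ := rfl

@[simp] lemma toWithBot_tang (a : ℝ) : toWithBot (tang a) = a := rfl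

lemma toWithBot_eq_bot {x : T} : toWithBot x = ⊥ ↔ x = 0 := by
  rcases x with _ | ⟨a, s⟩
  · exact iff_of_true rfl rfl
  · exact iff_of_false (WithBot.coe_ne_bot) (Option.some_ne_none _)

lemma toWithBot_of_ne_zero {x : T} (hx : x ≠ 0) : toWithBot x = val x := by
  rcases x with _ | ⟨a, s⟩
  · exact absurd rfl hx
  · rfl

lemma add_of_toWithBot_lt {x y : T} (h : toWithBot x < toWithBot y) : x + y = y := by
  rcases x with _ | ⟨a, s⟩ <;> rcases y with _ | ⟨b, t⟩
  · rfl
  · rfl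
  · exact absurd h not_lt_bot
  · exact if_pos (WithBot.coe_lt_coe.1 h)

lemma add_of_toWithBot_eq {x y : T} (h : toWithBot x = toWithBot y) : x + y = nu x := by
  rcases x with _ | ⟨a, s⟩ <;> rcases y with _ | ⟨b, t⟩
  · rfl
  · exact absurd h.symm WithBot.coe_ne_bot
  · exact absurd h WithBot.coe_ne_bot
  · obtain rfl : a = b := WithBot.coe_injective h
    exact (if_neg (lt_irrefl a)).trans (if_neg (lt_irrefl a))

lemma toWithBot_add (x y : T) : toWithBot (x + y) = max (toWithBot x) (toWithBot y) := by
  rcases lt_trichotomy (toWithBot x) (toWithBot y) with h | h | h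
  · rw [add_of_toWithBot_lt h, max_eq_right h.le]
  · rw [add_of_toWithBot_eq h, ← h, max_self]
    rcases x with _ | ⟨a, s⟩ <;> rfl
  · rw [add_comm, add_of_toWithBot_lt h, max_eq_left h.le]

lemma toWithBot_mul (x y : T) : toWithBot (x * y) = toWithBot x + toWithBot y := by
  rcases x with _ | ⟨a, s⟩ <;> rcases y with _ | ⟨b, t⟩ <;> rfl

lemma toWithBot_pow (x : T) (m : ℕ) : toWithBot (x ^ m) = m • toWithBot x := by
  induction m with
  | zero => rw [pow_zero, zero_nsmul]; rfl
  | succ m ih => rw [pow_succ, toWithBot_mul, ih, succ_nsmul]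

lemma toWithBot_prod {α : Type*} (F : Finset α) (g : α → T) :
    toWithBot (∏ j ∈ F, g j) = ∑ j ∈ F, toWithBot (g j) := by
  induction F using Finset.cons_induction with
  | empty => rfl
  | cons a F ha ih => rw [Finset.prod_cons, Finset.sum_cons, toWithBot_mul, ih]

lemma toWithBot_sum {α : Type*} (F : Finset α) (g : α → T) :
    toWithBot (∑ j ∈ F, g j) = F.sup fun j => toWithBot (g j) := by
  induction F using Finset.cons_induction with
  | empty => rfl
  | cons a F ha ih => rw [Finset.sum_cons, Finset.sup_cons, toWithBot_add, ih]

lemma tang_mul_tang (a b : ℝ) : tang a * tang b = tang (a + b) := rfl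

lemma isUnit_tang (a : ℝ) : IsUnit (tang a) :=
  .of_mul_eq_one (tang (-a)) (by rw [tang_mul_tang, add_neg_cancel]; rfl)

lemma lt_or_eq_tang_of_add_ne_left {s t : T} (h : s + t ≠ s) :
    toWithBot s < toWithBot t ∨ toWithBot s = toWithBot t ∧ ∃ v, s = tang v := by
  rcases lt_trichotomy (toWithBot s) (toWithBot t) with hlt | heq | hgt
  · exact .inl hlt
  · refine .inr ⟨heq, ?_⟩
    rw [add_of_toWithBot_eq heq] at h
    rcases s with _ | ⟨a, _ | _⟩
    · exact absurd rfl h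
    · exact ⟨a, rfl⟩
    · exact absurd rfl h
  · exact absurd (by rw [add_comm, add_of_toWithBot_lt hgt]) h

lemma add_eq_tang_cases {x y : T} {v : ℝ} (h : x + y = tang v) :
    x = tang v ∧ toWithBot y < v ∨ y = tang v ∧ toWithBot x < v := by
  rcases lt_trichotomy (toWithBot x) (toWithBot y) with hlt | heq | hgt
  · rw [add_of_toWithBot_lt hlt] at h
    exact .inr ⟨h, by rwa [h] at hlt⟩
  · rw [add_of_toWithBot_eq heq] at h
    rcases x with _ | ⟨a, s⟩ <;> cases h
  · rw [add_comm, add_of_toWithBot_lt hgt] at h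
    exact .inl ⟨h, by rwa [h] at hgt⟩

lemma exists_strict_max_of_sum_eq_tang {α : Type*} {F : Finset α} {g : α → T} {v : ℝ}
    (h : ∑ j ∈ F, g j = tang v) :
    ∃ j₀ ∈ F, toWithBot (g j₀) = v ∧ ∀ j ∈ F, j ≠ j₀ → toWithBot (g j) < v := by
  induction F using Finset.cons_induction with
  | empty => cases h
  | cons a F ha ih =>
    rw [Finset.sum_cons] at h
    rcases add_eq_tang_cases h with ⟨hA, hF⟩ | ⟨hF, hA⟩
    · refine ⟨a, Finset.mem_cons_self a F, by rw [hA]; rfl, fun j hj hja => ?_⟩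
      refine lt_of_le_of_lt ?_ hF
      rw [toWithBot_sum]
      exact Finset.le_sup (f := fun j => toWithBot (g j)) ((Finset.mem_cons.1 hj).resolve_left hja)
    · obtain ⟨j₀, hj₀, hv, hlt⟩ := ih hF
      refine ⟨j₀, Finset.mem_cons_of_mem hj₀, hv, fun j hj hjj₀ => ?_⟩
      rcases Finset.mem_cons.1 hj with rfl | hj
      exacts [hA, hlt j hj hjj₀]

lemma lt_or_unique_tie_of_sum_add_ne {α : Type*} {F : Finset α} {g : α → T} {t : T}
    (h : ∑ j ∈ F, g j + t ≠ ∑ j ∈ F, g j) :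
    (∀ j ∈ F, toWithBot (g j) < toWithBot t) ∨
      ∃ j₀ ∈ F, toWithBot (g j₀) = toWithBot t ∧
        ∀ j ∈ F, j ≠ j₀ → toWithBot (g j) < toWithBot t := by
  rcases lt_or_eq_tang_of_add_ne_left h with hlt | ⟨heq, v, hv⟩
  · refine .inl fun j hj => lt_of_le_of_lt ?_ hlt
    rw [toWithBot_sum]
    exact Finset.le_sup (f := fun j => toWithBot (g j)) hj
  · obtain ⟨j₀, hj₀, hv₀, hlt⟩ := exists_strict_max_of_sum_eq_tang hv
    rw [← heq, hv, toWithBot_tang]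
    exact .inr ⟨j₀, hj₀, hv₀, hlt⟩

variable {n : ℕ}

lemma coeff_removeMono (i j : Fin n →₀ ℕ) (f : MvPolynomial (Fin n) T) :
    (removeMono i f).coeff j = if j = i then 0 else f.coeff j := by
  simp only [removeMono, coeff_sum, coeff_monomial, Finset.sum_ite_eq', Finset.mem_erase]
  by_cases hj : j ∈ f.support <;> by_cases hji : j = i <;>
    simp_all [notMem_support_iff.1]

lemma support_removeMono (i : Fin n →₀ ℕ) (f : MvPolynomial (Fin n) T) :
    (removeMono i f).support = f.support.erase i := by
  ext j
  by_cases hji : j = i <;> simp [mem_support_iff, coeff_removeMono, hji]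

lemma removeMono_add_monomial {i : Fin n →₀ ℕ} {f : MvPolynomial (Fin n) T}
    (hi : i ∈ f.support) : removeMono i f + monomial i (f.coeff i) = f := by
  rw [removeMono, Finset.sum_erase_add _ _ hi, support_sum_monomial_coeff]

lemma eval_removeMono (a : Fin n → T) (i : Fin n →₀ ℕ) (f : MvPolynomial (Fin n) T) :
    eval a (removeMono i f) = ∑ j ∈ f.support.erase i, eval a (monomial j (f.coeff j)) :=
  map_sum _ _ _

lemma essential_iff {f : MvPolynomial (Fin n) T} {i : Fin n →₀ ℕ} :
    Essential f i ↔ i ∈ f.support ∧ ∃ a : Fin n → T,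
      eval a (removeMono i f) + eval a (monomial i (f.coeff i)) ≠ eval a (removeMono i f) := by
  simp only [Essential, Dominates, not_forall]

lemma toWithBot_eval_monomial (a : Fin n → T) (d : Fin n →₀ ℕ) (c : T) :
    toWithBot (eval a (monomial d c)) = toWithBot c + ∑ k, d k • toWithBot (a k) := by
  simp only [eval_monomial, Finsupp.prod_pow, toWithBot_mul, toWithBot_prod, toWithBot_pow]

lemma eval_monomial_eq_zero {a : Fin n → T} {d : Fin n →₀ ℕ} {k : Fin n} (hak : a k = 0)
    (hdk : d k ≠ 0) (c : T) : eval a (monomial d c) = 0 := by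
  rw [eval_monomial, Finsupp.prod_pow,
    Finset.prod_eq_zero (Finset.mem_univ k) (by rw [hak, zero_pow hdk]), mul_zero]

def exponentVec (d : Fin n →₀ ℕ) : Fin n → ℝ := fun k => d k

lemma exponentVec_injective : Function.Injective (exponentVec (n := n)) :=
  fun d i h => Finsupp.ext fun k => by simpa [exponentVec] using congrFun h k

lemma exponentVec_dotProduct_lt_of_ne {d i : Fin n →₀ ℕ} (h : d ≠ i) :
    exponentVec d ⬝ᵥ (exponentVec i - exponentVec d) <
      exponentVec i ⬝ᵥ (exponentVec i - exponentVec d) := by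
  rw [← sub_pos, ← sub_dotProduct]
  refine lt_of_le_of_ne (Finset.sum_nonneg fun k _ => mul_self_nonneg _) (Ne.symm ?_)
  rw [Ne, dotProduct_self_eq_zero, sub_eq_zero]
  exact fun h' => h (exponentVec_injective h'.symm)

/-- The value `π(f_d) + ⟨d, x⟩` of the monomial `f_d x^d` at the tangible point `x`; it is
meaningful only for `d ∈ f.support`, since `val (-∞) = 0`. -/
noncomputable def termValue (f : MvPolynomial (Fin n) T) (d : Fin n →₀ ℕ) (x : Fin n → ℝ) :
    ℝ :=
  val (f.coeff d) + exponentVec d ⬝ᵥ x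

lemma toWithBot_eval_monomial_coeff {f : MvPolynomial (Fin n) T} {d : Fin n →₀ ℕ}
    (hd : d ∈ f.support) {a : Fin n → T} (ha : ∀ k, a k = 0 → d k = 0) :
    toWithBot (eval a (monomial d (f.coeff d))) = termValue f d fun k => val (a k) := by
  rw [toWithBot_eval_monomial, toWithBot_of_ne_zero (mem_support_iff.1 hd), termValue,
    WithBot.coe_add, dotProduct, WithBot.coe_sum]
  congr 1
  refine Finset.sum_congr rfl fun k _ => ?_
  by_cases hak : a k = 0
  · simp [ha k hak, exponentVec]
  · rw [toWithBot_of_ne_zero hak, ← WithBot.coe_nsmul, nsmul_eq_mul]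
    rfl

lemma toWithBot_eval_tang_monomial {f : MvPolynomial (Fin n) T} {d : Fin n →₀ ℕ}
    (hd : d ∈ f.support) (x : Fin n → ℝ) :
    toWithBot (eval (fun k => tang (x k)) (monomial d (f.coeff d))) = termValue f d x :=
  toWithBot_eval_monomial_coeff hd fun _ h => absurd h (Option.some_ne_none _)

lemma toWithBot_eval_tang (f : MvPolynomial (Fin n) T) (x : Fin n → ℝ) :
    toWithBot (eval (fun k => tang (x k)) f) =
      f.support.sup fun d => (termValue f d x : WithBot ℝ) := by
  conv_lhs => rw [← support_sum_monomial_coeff f]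
  rw [map_sum, toWithBot_sum]
  exact Finset.sup_congr rfl fun d hd => toWithBot_eval_tang_monomial hd x

lemma termValue_le_toWithBot_eval_tang {f : MvPolynomial (Fin n) T} {d : Fin n →₀ ℕ}
    (hd : d ∈ f.support) (x : Fin n → ℝ) :
    (termValue f d x : WithBot ℝ) ≤ toWithBot (eval (fun k => tang (x k)) f) := by
  rw [toWithBot_eval_tang]
  exact Finset.le_sup (f := fun d => (termValue f d x : WithBot ℝ)) hd

lemma exists_termValue_eq_of_toWithBot_eval_tang_eq {f : MvPolynomial (Fin n) T}
    {x : Fin n → ℝ} {r : ℝ} (h : toWithBot (eval (fun k => tang (x k)) f) = r) :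
    ∃ d ∈ f.support, termValue f d x = r := by
  rw [toWithBot_eval_tang] at h
  have hne : f.support.Nonempty := Finset.nonempty_iff_ne_empty.2 fun he => by
    rw [he, Finset.sup_empty] at h
    exact WithBot.bot_ne_coe h
  obtain ⟨d, hd, hd_eq⟩ :=
    Finset.exists_mem_eq_sup _ hne fun d => (termValue f d x : WithBot ℝ)
  exact ⟨d, hd, WithBot.coe_injective (hd_eq ▸ h)⟩

lemma eval_tang_monomial_injective (x : Fin n → ℝ) (d : Fin n →₀ ℕ) :
    Function.Injective fun c : T => eval (fun k => tang (x k)) (monomial d c) := fun c c' h => by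
  simp only [eval_monomial, Finsupp.prod_pow] at h
  exact ((IsUnit.prod_univ_iff.2 fun k => (isUnit_tang (x k)).pow _).mul_left_inj).1 h

def StrictlyDominantAt (f : MvPolynomial (Fin n) T) (i : Fin n →₀ ℕ) (x : Fin n → ℝ) :
    Prop :=
  ∀ j ∈ f.support.erase i, termValue f j x < termValue f i x

section StrictlyDominantAt

variable {f : MvPolynomial (Fin n) T} {i : Fin n →₀ ℕ} {x : Fin n → ℝ}

lemma StrictlyDominantAt.toWithBot_eval_removeMono_lt (h : StrictlyDominantAt f i x) :
    toWithBot (eval (fun k => tang (x k)) (removeMono i f)) < termValue f i x := by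
  rw [eval_removeMono, toWithBot_sum, Finset.sup_lt_iff (WithBot.bot_lt_coe _)]
  intro j hj
  rw [toWithBot_eval_tang_monomial (Finset.mem_of_mem_erase hj)]
  exact WithBot.coe_lt_coe.2 (h j hj)

lemma StrictlyDominantAt.eval_tang (h : StrictlyDominantAt f i x) (hi : i ∈ f.support) :
    eval (fun k => tang (x k)) f = eval (fun k => tang (x k)) (monomial i (f.coeff i)) := by
  conv_lhs => rw [← removeMono_add_monomial hi]
  rw [map_add, add_of_toWithBot_lt]
  exact toWithBot_eval_tang_monomial hi x ▸ h.toWithBot_eval_removeMono_lt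

lemma StrictlyDominantAt.toWithBot_eval_tang (h : StrictlyDominantAt f i x)
    (hi : i ∈ f.support) : toWithBot (eval (fun k => tang (x k)) f) = termValue f i x := by
  rw [h.eval_tang hi, toWithBot_eval_tang_monomial hi]

lemma StrictlyDominantAt.essential (h : StrictlyDominantAt f i x) (hi : i ∈ f.support) :
    Essential f i := by
  refine essential_iff.2 ⟨hi, fun k => tang (x k), fun heq => ?_⟩
  have hlt := h.toWithBot_eval_removeMono_lt
  rw [← heq, toWithBot_add, toWithBot_eval_tang_monomial hi] at hlt
  exact lt_irrefl _ (max_lt_iff.1 hlt).2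

lemma StrictlyDominantAt.mono (h : StrictlyDominantAt f i x) {g : MvPolynomial (Fin n) T}
    (hsupp : g.support ⊆ f.support) (hcoeff : ∀ j ∈ g.support, g.coeff j = f.coeff j)
    (hi : i ∈ g.support) : StrictlyDominantAt g i x := by
  intro j hj
  have hj' := Finset.mem_of_mem_erase hj
  simp only [termValue, hcoeff j hj', hcoeff i hi]
  exact h j (Finset.mem_erase.2 ⟨Finset.ne_of_mem_erase hj, hsupp hj'⟩)

end StrictlyDominantAt

lemma termValue_add_smul (f : MvPolynomial (Fin n) T) (d : Fin n →₀ ℕ) (x u : Fin n → ℝ)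
    (t : ℝ) : termValue f d (x + t • u) = termValue f d x + t * (exponentVec d ⬝ᵥ u) := by
  rw [termValue, termValue, dotProduct_add, dotProduct_smul, smul_eq_mul, add_assoc]

lemma continuous_termValue (f : MvPolynomial (Fin n) T) (d : Fin n →₀ ℕ) :
    Continuous (termValue f d) := by
  unfold termValue dotProduct
  fun_prop

lemma tendsto_add_smul_nhds_zero (x u : Fin n → ℝ) :
    Tendsto (fun t : ℝ => x + t • u) (𝓝 0) (𝓝 x) := by
  have hc : Continuous fun t : ℝ => x + t • u := by fun_prop
  simpa using hc.tendsto 0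

lemma eventually_nhds_termValue_lt {f : MvPolynomial (Fin n) T} {i : Fin n →₀ ℕ}
    {x : Fin n → ℝ} {S : Finset (Fin n →₀ ℕ)}
    (h : ∀ j ∈ S, termValue f j x < termValue f i x) :
    ∀ᶠ y in 𝓝 x, ∀ j ∈ S, termValue f j y < termValue f i y :=
  (eventually_all_finset S).2 fun j hj =>
    (continuous_termValue f j).continuousAt.eventually_lt (continuous_termValue f i).continuousAt
      (h j hj)

lemma exists_strictlyDominantAt_of_le {f : MvPolynomial (Fin n) T} {i j₀ : Fin n →₀ ℕ}
    {x : Fin n → ℝ} (hj₀ : termValue f j₀ x ≤ termValue f i x)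
    (h : ∀ j ∈ f.support.erase i, j ≠ j₀ → termValue f j x < termValue f i x) :
    ∃ y, StrictlyDominantAt f i y := by
  rcases hj₀.lt_or_eq with hlt | htie
  · exact ⟨x, fun j hj => if hjj : j = j₀ then hjj ▸ hlt else h j hj hjj⟩
  by_cases hji : j₀ = i
  · subst hji
    exact ⟨x, fun j hj => h j hj (Finset.ne_of_mem_erase hj)⟩
  -- moving towards `exponentVec i - exponentVec j₀` breaks the tie in favour of `i`
  set u := exponentVec i - exponentVec j₀
  have hothers : ∀ᶠ t : ℝ in 𝓝[>] 0, ∀ j ∈ (f.support.erase i).erase j₀,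
      termValue f j (x + t • u) < termValue f i (x + t • u) :=
    ((tendsto_add_smul_nhds_zero x u).mono_left nhdsWithin_le_nhds).eventually
      (eventually_nhds_termValue_lt fun j hj =>
        h j (Finset.mem_of_mem_erase hj) (Finset.ne_of_mem_erase hj))
  obtain ⟨t, ht, htpos⟩ := (hothers.and self_mem_nhdsWithin).exists
  refine ⟨x + t • u, fun j hj => ?_⟩
  by_cases hjj : j = j₀
  · subst hjj
    have hu := exponentVec_dotProduct_lt_of_ne hji
    rw [termValue_add_smul, termValue_add_smul, htie]
    have htpos : (0 : ℝ) < t := htpos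
    nlinarith
  · exact ht j (Finset.mem_erase.2 ⟨hjj, hj⟩)

lemma eventually_atBot_termValue_lt {f : MvPolynomial (Fin n) T} {i j : Fin n →₀ ℕ}
    {x u : Fin n → ℝ}
    (h : termValue f j x < termValue f i x ∧ exponentVec j ⬝ᵥ u = exponentVec i ⬝ᵥ u ∨
      exponentVec i ⬝ᵥ u < exponentVec j ⬝ᵥ u) :
    ∀ᶠ t : ℝ in atBot, termValue f j (x + t • u) < termValue f i (x + t • u) := by
  simp only [termValue_add_smul]
  rcases h with ⟨hlt, heq⟩ | hslope
  · exact .of_forall fun t => by rw [heq]; linarith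
  · filter_upwards [eventually_lt_atBot ((termValue f i x - termValue f j x) /
      (exponentVec j ⬝ᵥ u - exponentVec i ⬝ᵥ u))] with t ht
    rw [lt_div_iff₀ (sub_pos.2 hslope)] at ht
    linarith

lemma eq_of_eventually_termValue_le {f g : MvPolynomial (Fin n) T} {d i : Fin n →₀ ℕ}
    {x : Fin n → ℝ} (hx : termValue g d x = termValue f i x)
    (h : ∀ᶠ y in 𝓝 x, termValue g d y ≤ termValue f i y) : d = i := by
  by_contra hdi
  set u := exponentVec i - exponentVec d
  obtain ⟨t, ht, htneg⟩ := ((((tendsto_add_smul_nhds_zero x u).mono_left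
    nhdsWithin_le_nhds).eventually h).and (self_mem_nhdsWithin (s := Set.Iio 0))).exists
  have hu := exponentVec_dotProduct_lt_of_ne hdi
  rw [termValue_add_smul, termValue_add_smul, hx] at ht
  have htneg : t < 0 := htneg
  nlinarith

lemma exponentVec_dotProduct_indicator_eq_zero {d : Fin n →₀ ℕ} {s : Set (Fin n)}
    (h : ∀ k ∈ s, d k = 0) : exponentVec d ⬝ᵥ s.indicator 1 = 0 :=
  Finset.sum_eq_zero fun k _ => by
    by_cases hk : k ∈ s <;> simp [exponentVec, hk, h k]

lemma exponentVec_dotProduct_indicator_pos {d : Fin n →₀ ℕ} {s : Set (Fin n)} {k : Fin n}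
    (hk : k ∈ s) (hdk : d k ≠ 0) : 0 < exponentVec d ⬝ᵥ s.indicator 1 := by
  refine Finset.sum_pos' (fun l _ => mul_nonneg (Nat.cast_nonneg _)
    (Set.indicator_nonneg (fun _ _ => zero_le_one) l)) ⟨k, Finset.mem_univ k, ?_⟩
  simpa [exponentVec, hk] using Nat.pos_of_ne_zero hdk

lemma forall_eq_zero_of_eval_monomial_ne_zero {a : Fin n → T} {d : Fin n →₀ ℕ} {c : T}
    (h : eval a (monomial d c) ≠ 0) : ∀ k ∈ {k | a k = 0}, d k = 0 :=
  fun _ hk => by_contra fun hdk => h (eval_monomial_eq_zero hk hdk c)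

lemma termValue_add_smul_indicator {f : MvPolynomial (Fin n) T} {d : Fin n →₀ ℕ}
    {s : Set (Fin n)} (h : ∀ k ∈ s, d k = 0) (x : Fin n → ℝ) (t : ℝ) :
    termValue f d (x + t • s.indicator 1) = termValue f d x := by
  rw [termValue_add_smul, exponentVec_dotProduct_indicator_eq_zero h, mul_zero, add_zero]

/-- Moving the `-∞` coordinates of `a` to `-∞` keeps the value of every monomial that does not
vanish at `a` and sends the others below any bound. -/
lemma eventually_atBot_termValue_lt_of_toWithBot_lt {f : MvPolynomial (Fin n) T}
    {i j : Fin n →₀ ℕ} {a : Fin n → T} (hi : i ∈ f.support) (hj : j ∈ f.support)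
    (hlt : toWithBot (eval a (monomial j (f.coeff j))) <
      toWithBot (eval a (monomial i (f.coeff i)))) :
    ∀ᶠ t : ℝ in atBot,
      termValue f j ((fun k => val (a k)) + t • {k | a k = 0}.indicator 1) <
        termValue f i ((fun k => val (a k)) + t • {k | a k = 0}.indicator 1) := by
  have hmi : eval a (monomial i (f.coeff i)) ≠ 0 := fun h0 => by
    rw [h0, toWithBot_zero] at hlt
    exact not_lt_bot hlt
  have hilive := forall_eq_zero_of_eval_monomial_ne_zero hmi
  refine eventually_atBot_termValue_lt ?_
  rw [exponentVec_dotProduct_indicator_eq_zero hilive]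
  by_cases hjlive : ∀ k ∈ {k | a k = 0}, j k = 0
  · rw [toWithBot_eval_monomial_coeff hj hjlive, toWithBot_eval_monomial_coeff hi hilive,
      WithBot.coe_lt_coe] at hlt
    exact .inl ⟨hlt, exponentVec_dotProduct_indicator_eq_zero hjlive⟩
  · obtain ⟨k, hk, hjk⟩ := not_forall₂.1 hjlive
    exact .inr (exponentVec_dotProduct_indicator_pos hk hjk)

lemma exists_strictlyDominantAt_of_essential {f : MvPolynomial (Fin n) T} {i : Fin n →₀ ℕ}
    (h : Essential f i) : ∃ x, StrictlyDominantAt f i x := by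
  obtain ⟨hi, a, ha⟩ := essential_iff.1 h
  rw [eval_removeMono] at ha
  rcases lt_or_unique_tie_of_sum_add_ne ha with hall | ⟨j₀, hj₀, htie, hothers⟩
  · obtain ⟨t, ht⟩ := ((eventually_all_finset _).2 fun j hj =>
      eventually_atBot_termValue_lt_of_toWithBot_lt hi (Finset.mem_of_mem_erase hj)
        (hall j hj)).exists
    exact ⟨_, ht⟩
  obtain ⟨t, ht⟩ := ((eventually_all_finset ((f.support.erase i).erase j₀)).2 fun j hj =>
    eventually_atBot_termValue_lt_of_toWithBot_lt hi
      (Finset.mem_of_mem_erase (Finset.mem_of_mem_erase hj))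
      (hothers j (Finset.mem_of_mem_erase hj) (Finset.ne_of_mem_erase hj))).exists
  refine exists_strictlyDominantAt_of_le (j₀ := j₀) ?_
    fun j hj hjj => ht j (Finset.mem_erase.2 ⟨hjj, hj⟩)
  have hmi : eval a (monomial i (f.coeff i)) ≠ 0 := fun h0 => ha (by rw [h0, add_zero])
  have hm₀ : eval a (monomial j₀ (f.coeff j₀)) ≠ 0 := fun h0 =>
    hmi (toWithBot_eq_bot.1 (by rw [← htie, h0, toWithBot_zero]))
  have hilive := forall_eq_zero_of_eval_monomial_ne_zero hmi
  have hj₀live := forall_eq_zero_of_eval_monomial_ne_zero hm₀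
  rw [toWithBot_eval_monomial_coeff (Finset.mem_of_mem_erase hj₀) hj₀live,
    toWithBot_eval_monomial_coeff hi hilive] at htie
  rw [termValue_add_smul_indicator hj₀live, termValue_add_smul_indicator hilive,
    WithBot.coe_injective htie]

lemma essential_iff_exists_strictlyDominantAt {f : MvPolynomial (Fin n) T} {i : Fin n →₀ ℕ} :
    Essential f i ↔ i ∈ f.support ∧ ∃ x, StrictlyDominantAt f i x :=
  ⟨fun h => ⟨h.1, exists_strictlyDominantAt_of_essential h⟩,
    fun ⟨hi, _, hx⟩ => hx.essential hi⟩

lemma termValue_removeMono {f : MvPolynomial (Fin n) T} {d j : Fin n →₀ ℕ} (hdj : d ≠ j)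
    (x : Fin n → ℝ) : termValue (removeMono j f) d x = termValue f d x := by
  rw [termValue, termValue, coeff_removeMono, if_neg hdj]

lemma essential_removeMono_iff {f : MvPolynomial (Fin n) T} {i j : Fin n →₀ ℕ}
    (hjs : j ∈ f.support) (hj : ¬Essential f j) (hij : i ≠ j) :
    Essential (removeMono j f) i ↔ Essential f i := by
  simp only [essential_iff_exists_strictlyDominantAt, support_removeMono, Finset.mem_erase,
    hij, ne_eq, not_false_eq_true, true_and]
  refine and_congr_right fun hi => ⟨fun ⟨x, hx⟩ => ?_, fun ⟨x, hx⟩ => ?_⟩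
  · have hx' : ∀ d ∈ f.support.erase i, d ≠ j → termValue f d x < termValue f i x :=
      fun d hd hdj => by
        have hd' : d ∈ (removeMono j f).support.erase i := by
          rw [support_removeMono, Finset.erase_right_comm]
          exact Finset.mem_erase.2 ⟨hdj, hd⟩
        simpa only [termValue_removeMono hdj, termValue_removeMono hij] using hx d hd'
    refine exists_strictlyDominantAt_of_le (le_of_not_gt fun hji => hj ?_) hx'
    refine StrictlyDominantAt.essential (x := x) (fun d hd => ?_) hjs
    by_cases hdi : d = i
    · exact hdi ▸ hji
    · exact (hx' d (Finset.mem_erase.2 ⟨hdi, Finset.mem_of_mem_erase hd⟩)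
        (Finset.ne_of_mem_erase hd)).trans hji
  · refine ⟨x, hx.mono (by rw [support_removeMono]; exact Finset.erase_subset _ _) ?_
      (by rw [support_removeMono]; exact Finset.mem_erase.2 ⟨hij, hi⟩)⟩
    intro d hd
    rw [support_removeMono] at hd
    rw [coeff_removeMono, if_neg (Finset.ne_of_mem_erase hd)]

lemma coeff_essentialPart_of_essential {f : MvPolynomial (Fin n) T} {d : Fin n →₀ ℕ}
    (h : Essential f d) : (essentialPart f).coeff d = f.coeff d := by
  rw [essentialPart, coeff_sum, Finset.sum_eq_single d, if_pos h, coeff_monomial, if_pos rfl]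
  · intro i _ hid
    split_ifs <;> simp [coeff_monomial, hid]
  · exact fun hd => absurd h.1 hd

lemma coeff_essentialPart_of_not_essential {f : MvPolynomial (Fin n) T} {d : Fin n →₀ ℕ}
    (h : ¬Essential f d) : (essentialPart f).coeff d = 0 := by
  rw [essentialPart, coeff_sum]
  refine Finset.sum_eq_zero fun i _ => ?_
  split_ifs with hi
  · rw [coeff_monomial, if_neg fun hid : i = d => h (hid ▸ hi)]
  · exact coeff_zero d

lemma essentialPart_eq_self {f : MvPolynomial (Fin n) T} (h : ∀ i ∈ f.support, Essential f i) :
    essentialPart f = f := by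
  ext d
  by_cases hd : d ∈ f.support
  · exact coeff_essentialPart_of_essential (h d hd)
  · rw [coeff_essentialPart_of_not_essential (fun h => hd h.1), notMem_support_iff.1 hd]

lemma essentialPart_removeMono {f : MvPolynomial (Fin n) T} {j : Fin n →₀ ℕ}
    (hjs : j ∈ f.support) (hj : ¬Essential f j) :
    essentialPart (removeMono j f) = essentialPart f := by
  ext d
  by_cases hdj : d = j
  · subst hdj
    rw [coeff_essentialPart_of_not_essential hj, coeff_essentialPart_of_not_essential]
    exact fun h => by simpa [support_removeMono] using h.1
  by_cases hd : Essential f d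
  · rw [coeff_essentialPart_of_essential hd,
      coeff_essentialPart_of_essential ((essential_removeMono_iff hjs hj hdj).2 hd),
      coeff_removeMono, if_neg hdj]
  · rw [coeff_essentialPart_of_not_essential hd,
      coeff_essentialPart_of_not_essential (mt (essential_removeMono_iff hjs hj hdj).1 hd)]

lemma eval_removeMono_of_not_essential {f : MvPolynomial (Fin n) T} {j : Fin n →₀ ℕ}
    (hjs : j ∈ f.support) (hj : ¬Essential f j) (a : Fin n → T) :
    eval a (removeMono j f) = eval a f := by
  have hdom : Dominates (removeMono j f) (monomial j (f.coeff j)) :=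
    not_not.1 fun h => hj ⟨hjs, h⟩
  rw [← hdom a, ← map_add, removeMono_add_monomial hjs]

theorem eval_essentialPart (f : MvPolynomial (Fin n) T) (a : Fin n → T) :
    eval a (essentialPart f) = eval a f := by
  by_cases hall : ∀ i ∈ f.support, Essential f i
  · rw [essentialPart_eq_self hall]
  · obtain ⟨j, hjs, hj⟩ := not_forall₂.1 hall
    rw [← essentialPart_removeMono hjs hj, ← eval_removeMono_of_not_essential hjs hj]
    exact eval_essentialPart (removeMono j f) a
termination_by f.support.card
decreasing_by rw [support_removeMono]; exact Finset.card_erase_lt_of_mem hjs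

lemma essential_essentialPart {f : MvPolynomial (Fin n) T} {i : Fin n →₀ ℕ}
    (hi : i ∈ (essentialPart f).support) : Essential (essentialPart f) i := by
  have hess : ∀ d ∈ (essentialPart f).support, Essential f d := fun d hd =>
    not_not.1 fun h => mem_support_iff.1 hd (coeff_essentialPart_of_not_essential h)
  obtain ⟨-, x, hx⟩ := essential_iff_exists_strictlyDominantAt.1 (hess i hi)
  exact (hx.mono (fun d hd => (hess d hd).1)
    (fun d hd => coeff_essentialPart_of_essential (hess d hd)) hi).essential hi

lemma coeff_eq_of_eval_tang_eq {f g : MvPolynomial (Fin n) T} {i : Fin n →₀ ℕ}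
    (heq : ∀ x : Fin n → ℝ, eval (fun k => tang (x k)) f = eval (fun k => tang (x k)) g)
    (hi : Essential f i) : g.coeff i = f.coeff i := by
  obtain ⟨hif, x₀, hx₀⟩ := essential_iff_exists_strictlyDominantAt.1 hi
  have hle : ∀ x, StrictlyDominantAt f i x → ∀ d ∈ g.support,
      termValue g d x ≤ termValue f i x := fun x hx d hd =>
    WithBot.coe_le_coe.1
      (hx.toWithBot_eval_tang hif ▸ heq x ▸ termValue_le_toWithBot_eval_tang hd x)
  -- near `x₀` the function of `g` is the affine function of `i` in `f`, so only the exponent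
  -- `i` can touch it at `x₀`
  have htouch : ∀ d ∈ g.support, termValue g d x₀ = termValue f i x₀ → d = i :=
    fun d hd hdeq => eq_of_eventually_termValue_le hdeq
      ((eventually_nhds_termValue_lt hx₀).mono fun x hx => hle x hx d hd)
  obtain ⟨d₀, hd₀, hd₀eq⟩ :=
    exists_termValue_eq_of_toWithBot_eval_tang_eq (heq x₀ ▸ hx₀.toWithBot_eval_tang hif)
  obtain rfl := htouch d₀ hd₀ hd₀eq
  have hgx₀ : StrictlyDominantAt g d₀ x₀ := fun d hd => hd₀eq ▸
    (hle x₀ hx₀ d (Finset.mem_of_mem_erase hd)).lt_of_ne fun h =>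
      Finset.ne_of_mem_erase hd (htouch d (Finset.mem_of_mem_erase hd) h)
  refine eval_tang_monomial_injective x₀ d₀ ?_
  simp only [← hgx₀.eval_tang hd₀, ← hx₀.eval_tang hif, heq]

end T

/-- two polynomials are equivalent iff they have the same essential part. -/
theorem tropical_equiv_iff_essentialPart_eq (n : ℕ) (f g : MvPolynomial (Fin n) T) :
    (∀ a : Fin n → T, MvPolynomial.eval a f = MvPolynomial.eval a g)
      ↔ T.essentialPart f = T.essentialPart g := by
  refine ⟨fun h => ?_, fun h a => by rw [← T.eval_essentialPart f, h, T.eval_essentialPart]⟩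
  have he : ∀ a,
      MvPolynomial.eval a (T.essentialPart f) = MvPolynomial.eval a (T.essentialPart g) :=
    fun a => by rw [T.eval_essentialPart, T.eval_essentialPart, h]
  ext d
  by_cases hf : d ∈ (T.essentialPart f).support
  · exact (T.coeff_eq_of_eval_tang_eq (fun _ => he _) (T.essential_essentialPart hf)).symm
  by_cases hg : d ∈ (T.essentialPart g).support
  · exact T.coeff_eq_of_eval_tang_eq (fun _ => (he _).symm) (T.essential_essentialPart hg)
  rw [MvPolynomial.notMem_support_iff.1 hf, MvPolynomial.notMem_support_iff.1 hg]
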